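/- Let w = (I₁,…,I_{n−1}) be a word over {R, L, D} (instructions right, left, down) containing none of the contiguous factors LR, RL, LDR, RDL. Define positions p₀ = (0,0) and p_k = p_{k−1} + v(I_k) where v(R)=(1,0), v(L)=(−1,0), v(D)=(0,−1). Then all points p₀, p₁, …, p_{n−1} are pairwise distinct. -/
import Mathlib


/-- Instructions: right, left, down. -/
inductive Instr | R | L | D
deriving DecidableEq

open Instr

/-- The step vector of each instruction. -/
def vstep : Instr → ℤ × ℤ
  | R => (1, 0)
  | L => (-1, 0)
  | D => (0, -1)

/-- Position after the first `k` instructions of the word `w`, starting at the origin. -/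
def pos (w : List Instr) (k : ℕ) : ℤ × ℤ := ((w.take k).map vstep).sum

lemma sum_snd (s : List Instr) : ((s.map vstep).sum).2 = -(s.count D : ℤ) := by
  induction s with
  | nil => simp
  | cons a t ih => cases a <;> simp [vstep, ih, List.count_cons] <;> ring

lemma sum_fst (s : List Instr) :
    ((s.map vstep).sum).1 = (s.count R : ℤ) - (s.count L : ℤ) := by
  induction s with
  | nil => simp
  | cons a t ih => cases a <;> simp [vstep, ih, List.count_cons] <;> ring

lemma all_eq : ∀ (s : List Instr), D ∉ s → ¬ [L, R] <:+: s → ¬ [R, L] <:+: s →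
    s = List.replicate s.length R ∨ s = List.replicate s.length L := by
  intro s
  induction s with
  | nil => simp
  | cons a t ih =>
    intro hD h1 h2
    match t, ih with
    | [], _ =>
      cases a
      · left; rfl
      · right; rfl
      · simp at hD
    | b :: t, ih =>
      have htail : (b :: t) <:+ (a :: b :: t) := List.suffix_cons a _
      have ih' := ih (fun h => hD (List.mem_cons_of_mem a h))
        (fun h => h1 (h.trans htail.isInfix)) (fun h => h2 (h.trans htail.isInfix))
      have hab : [a, b] <+: a :: b :: t := ⟨t, rfl⟩
      have hD' : a ≠ D := fun h => hD (by simp [h])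
      have heq : a = b := by
        cases a <;> cases b <;> first
          | rfl
          | exact absurd hab.isInfix h2
          | exact absurd hab.isInfix h1
          | exact absurd rfl hD'
          | exact absurd (by simp) hD
      rcases ih' with h | h
      · rw [List.length_cons, List.replicate_succ] at h
        obtain ⟨hb, ht⟩ := List.cons_eq_cons.mp h
        left; rw [heq, hb]; simpa [List.replicate_succ] using ht
      · rw [List.length_cons, List.replicate_succ] at h
        obtain ⟨hb, ht⟩ := List.cons_eq_cons.mp h
        right; rw [heq, hb]; simpa [List.replicate_succ] using ht

/-- A word over `{R,L,D}` avoiding the contiguous factors `LR`, `RL`, `LDR`, `RDL`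
traces a self-avoiding walk on `ℤ²`: all points `p₀, …, p_{n−1}` are pairwise distinct. -/
theorem self_avoiding (w : List Instr)
    (hLR : ¬ [L, R] <:+: w) (hRL : ¬ [R, L] <:+: w)
    (hLDR : ¬ [L, D, R] <:+: w) (hRDL : ¬ [R, D, L] <:+: w) :
    ∀ j k, j ≤ w.length → k ≤ w.length → j ≠ k → pos w j ≠ pos w k := by
  suffices H : ∀ j k, k ≤ w.length → j < k → pos w j ≠ pos w k by
    intro j k hj hk hne
    rcases lt_or_gt_of_ne hne with h | h
    · exact H j k hk h
    · exact fun he => H k j hj h he.symm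
  intro j k hk hjk heq
  set s := (w.take k).drop j with hs
  have hsw : s <:+: w := ((w.take k).drop_suffix j).isInfix.trans (w.take_prefix k).isInfix
  have hsplit : w.take j ++ s = w.take k := by
    have h1 : (w.take k).take j = w.take j := by rw [List.take_take, min_eq_left hjk.le]
    rw [hs, ← h1]; exact List.take_append_drop j (w.take k)
  have hsum : (s.map vstep).sum = 0 := by
    have : pos w k = pos w j + (s.map vstep).sum := by
      rw [pos, ← hsplit, List.map_append, List.sum_append]; rfl
    rw [heq] at this
    exact (add_eq_left.mp this.symm)
  have hlen : 0 < s.length := by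
    have : s.length = k - j := by
      rw [hs, List.length_drop, List.length_take, min_eq_left hk]
    omega
  have hDcount : s.count D = 0 := by
    have := sum_snd s
    rw [hsum] at this
    simpa using this.symm
  have hD : D ∉ s := List.count_eq_zero.mp hDcount
  have hRLcount : (s.count R : ℤ) - s.count L = 0 := by
    have := sum_fst s
    rw [hsum] at this
    simpa using this.symm
  rcases all_eq s hD (fun h => hLR (h.trans hsw)) (fun h => hRL (h.trans hsw)) with h | h
  · have : s.count R = s.length ∧ s.count L = 0 := by
      constructor <;> rw [h] <;> simp [List.count_replicate]
    omega
  · have : s.count L = s.length ∧ s.count R = 0 := by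
      constructor <;> rw [h] <;> simp [List.count_replicate]
    omega
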